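/- arXiv:2207.06198 — 3 statements merged into one kernel-verified Lean document; each statement's English description precedes it below -/
import Mathlib

section
/- Let P be a set of prime numbers, let λ : ℕ → ℝ, and let B, c, C be positive real numbers such that: (i) |λ(p)| ≤ B for every p ∈ P; (ii) for every real X ≥ 3, |∑_{p ∈ P, p ≤ X} λ(p)/p| ≤ C; and (iii) for every real X ≥ 3, |∑_{p ∈ P, p ≤ X} λ(p)²/p − c·log log X| ≤ C. Then both sets {p ∈ P : λ(p) > 0} and {p ∈ P : λ(p) < 0} are infinite. -/
open Finset
open scoped Classical

/-!
If `λ(p) ≥ 0` for all large `p ∈ P`, then `λ(p)² ≤ B λ(p)` there, so every tail of the second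
moment is at most `B` times the corresponding tail of the first moment, which is `O(B C)`.
Hence the second moment stays bounded, contradicting its growth like `c log log X`.
Replacing `λ` by `-λ` leaves all hypotheses unchanged and gives the other sign.
-/

open Filter Real

lemma sq_div_le_mul_div {x B d : ℝ} (hx : 0 ≤ x) (hxB : x ≤ B) (hd : 0 ≤ d) :
    x ^ 2 / d ≤ B * (x / d) := by
  rw [← mul_div_assoc]
  exact div_le_div_of_nonneg_right (by nlinarith) hd

lemma exists_eventually_partialSums_le_of_eventually_le_mul {f g : ℕ → ℝ} {B C : ℝ} (hB : 0 ≤ B)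
    (hgf : ∀ᶠ k in atTop, g k ≤ B * f k)
    (hf : ∀ᶠ n in atTop, |∑ k ∈ range n, f k| ≤ C) :
    ∃ A, ∀ᶠ n in atTop, ∑ k ∈ range n, g k ≤ A := by
  obtain ⟨N, hN⟩ := eventually_atTop.1 (hgf.and hf)
  refine ⟨∑ k ∈ range N, g k + B * (2 * C), ?_⟩
  filter_upwards [eventually_ge_atTop N] with n hn
  have hfN := abs_le.1 (hN N le_rfl).2
  have hfn := abs_le.1 (hN n hn).2
  calc ∑ k ∈ range n, g k
      = ∑ k ∈ range N, g k + ∑ k ∈ Ico N n, g k := (sum_range_add_sum_Ico g hn).symm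
    _ ≤ ∑ k ∈ range N, g k + B * ∑ k ∈ Ico N n, f k := by
        rw [mul_sum]
        gcongr with k hk
        exact (hN k (mem_Ico.1 hk).1).1
    _ = ∑ k ∈ range N, g k + B * (∑ k ∈ range n, f k - ∑ k ∈ range N, f k) := by
        rw [sum_Ico_eq_sub f hn]
    _ ≤ ∑ k ∈ range N, g k + B * (2 * C) := by
        gcongr
        linarith

lemma not_tendsto_partialSums_of_eventually_le_mul {f g : ℕ → ℝ} {B C : ℝ} (hB : 0 ≤ B)
    (hgf : ∀ᶠ k in atTop, g k ≤ B * f k)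
    (hf : ∀ᶠ n in atTop, |∑ k ∈ range n, f k| ≤ C) :
    ¬ Tendsto (fun n => ∑ k ∈ range n, g k) atTop atTop := by
  intro hg
  obtain ⟨A, hA⟩ := exists_eventually_partialSums_le_of_eventually_le_mul hB hgf hf
  obtain ⟨n, hle, hgt⟩ := (hA.and (tendsto_atTop.1 hg (A + 1))).exists
  linarith

lemma infinite_setOf_neg_of_bounded_moment_of_tendsto_sq_moment (P : Set ℕ) (lam : ℕ → ℝ)
    {B C : ℝ} (hB : 0 ≤ B) (h1 : ∀ p ∈ P, |lam p| ≤ B)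
    (h2 : ∀ᶠ n in atTop, |∑ p ∈ (range n).filter (· ∈ P), lam p / p| ≤ C)
    (h3 : Tendsto (fun n => ∑ p ∈ (range n).filter (· ∈ P), lam p ^ 2 / p) atTop atTop) :
    {p : ℕ | p ∈ P ∧ lam p < 0}.Infinite := by
  intro hfin
  simp only [sum_filter] at h2 h3
  refine not_tendsto_partialSums_of_eventually_le_mul hB ?_ h2 h3
  filter_upwards [Nat.cofinite_eq_atTop ▸ hfin.eventually_cofinite_notMem] with p hp
  split_ifs with hpP
  · exact sq_div_le_mul_div (not_lt.1 fun h => hp ⟨hpP, h⟩)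
      ((le_abs_self _).trans (h1 p hpP)) p.cast_nonneg
  · simp

lemma eventually_atTop_of_forall_floor_add_one {Φ : ℕ → Prop} {a : ℝ}
    (h : ∀ X : ℝ, a ≤ X → Φ (⌊X⌋₊ + 1)) : ∀ᶠ n in atTop, Φ n := by
  filter_upwards [eventually_gt_atTop ⌈a⌉₊] with n hn
  obtain ⟨m, rfl⟩ := Nat.exists_eq_add_one_of_ne_zero (by omega : n ≠ 0)
  simpa only [Nat.floor_natCast] using h m (Nat.ceil_le.1 (by omega))

lemma tendsto_atTop_of_abs_sub_log_log_le {u : ℕ → ℝ} {c C : ℝ} (hc : 0 < c)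
    (h : ∀ᶠ n : ℕ in atTop, |u n - c * log (log n)| ≤ C) : Tendsto u atTop atTop := by
  have hloglog : Tendsto (fun n : ℕ => c * log (log n) - C) atTop atTop :=
    tendsto_atTop_add_const_right _ _ <| Tendsto.const_mul_atTop hc <|
      tendsto_log_atTop.comp <| tendsto_log_atTop.comp tendsto_natCast_atTop_atTop
  refine tendsto_atTop_mono' _ ?_ hloglog
  filter_upwards [h] with n hn
  linarith [abs_le.1 hn]

theorem sign_change_criterion_bounded_general
    (P : Set ℕ) (lam : ℕ → ℝ)
    (B c C : ℝ) (hB : 0 < B) (hc : 0 < c)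
    (h1 : ∀ p ∈ P, |lam p| ≤ B)
    (h2 : ∀ X : ℝ, 3 ≤ X →
      |∑ p ∈ (Finset.range (⌊X⌋₊ + 1)).filter (fun p => p ∈ P), lam p / p| ≤ C)
    (h3 : ∀ X : ℝ, 3 ≤ X →
      |(∑ p ∈ (Finset.range (⌊X⌋₊ + 1)).filter (fun p => p ∈ P), (lam p) ^ 2 / p)
        - c * Real.log (Real.log X)| ≤ C) :
    {p : ℕ | p ∈ P ∧ 0 < lam p}.Infinite ∧ {p : ℕ | p ∈ P ∧ lam p < 0}.Infinite := by
  have hS1 : ∀ᶠ n in atTop, |∑ p ∈ (range n).filter (· ∈ P), lam p / p| ≤ C :=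
    eventually_atTop_of_forall_floor_add_one (Φ := fun n => _ ≤ C) h2
  have hS2 : Tendsto (fun n => ∑ p ∈ (range n).filter (· ∈ P), lam p ^ 2 / p) atTop atTop := by
    refine (tendsto_add_atTop_iff_nat 1).1 (tendsto_atTop_of_abs_sub_log_log_le (C := C) hc ?_)
    filter_upwards [eventually_ge_atTop 3] with n hn
    simpa only [Nat.floor_natCast] using h3 n (by exact_mod_cast hn)
  refine ⟨?_, infinite_setOf_neg_of_bounded_moment_of_tendsto_sq_moment P lam hB.le h1 hS1 hS2⟩
  simpa using infinite_setOf_neg_of_bounded_moment_of_tendsto_sq_moment P (-lam) hB.le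
    (by simpa using h1) (by simpa [neg_div] using hS1) (by simpa using hS2)

/-- Abstract sign-change criterion: bounded coefficients on a set of primes whose first
moment over primes is bounded while the second moment grows like c·log log X must take
positive values infinitely often and negative values infinitely often. -/
theorem sign_change_criterion_bounded
    (P : Set ℕ) (hP : ∀ p ∈ P, Nat.Prime p) (lam : ℕ → ℝ)
    (B c C : ℝ) (hB : 0 < B) (hc : 0 < c) (hC : 0 < C)
    (h1 : ∀ p ∈ P, |lam p| ≤ B)
    (h2 : ∀ X : ℝ, 3 ≤ X →
      |∑ p ∈ (Finset.range (⌊X⌋₊ + 1)).filter (fun p => p ∈ P), lam p / p| ≤ C)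
    (h3 : ∀ X : ℝ, 3 ≤ X →
      |(∑ p ∈ (Finset.range (⌊X⌋₊ + 1)).filter (fun p => p ∈ P), (lam p) ^ 2 / p)
        - c * Real.log (Real.log X)| ≤ C) :
    {p : ℕ | p ∈ P ∧ 0 < lam p}.Infinite ∧ {p : ℕ | p ∈ P ∧ lam p < 0}.Infinite :=
  sign_change_criterion_bounded_general P lam B c C hB hc h1 h2 h3
end

section
/- Let P be a set of prime numbers, let λ : ℕ → ℝ, and let B, c, C be positive real numbers such that: (i) |λ(p)| ≤ B·p^{1/2} for every p ∈ P; (ii) for every real X ≥ 3, |∑_{p ∈ P, p ≤ X} λ(p)/p^{3/2}| ≤ C; and (iii) for every real X ≥ 3, |∑_{p ∈ P, p ≤ X} λ(p)²/p² − c·log log X| ≤ C. Then both sets {p ∈ P : λ(p) > 0} and {p ∈ P : λ(p) < 0} are infinite. -/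
open Finset
open scoped Classical

/-! If `λ(p) < 0` for only finitely many `p ∈ P`, then `∑ |λ(p)| / p^{3/2}` exceeds the
bounded first moment by at most a constant, and `λ(p)² / p² ≤ B |λ(p)| / p^{3/2}` then bounds
the second moment, against its growth like `c log log X`. Applying this to `-λ` gives the other
sign. -/

lemma Finset.sum_negPart_le_of_neg_imp_mem {ι : Type*} {s t : Finset ι} {a : ι → ℝ}
    (h : ∀ i ∈ s, a i < 0 → i ∈ t) : ∑ i ∈ s, (a i)⁻ ≤ ∑ i ∈ t, (a i)⁻ :=
  calc ∑ i ∈ s, (a i)⁻ = ∑ i ∈ s.filter (· ∈ t), (a i)⁻ :=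
        (sum_filter_of_ne fun i hi hne => h i hi (by
          by_contra! hai
          exact hne (negPart_eq_zero.2 hai))).symm
    _ ≤ ∑ i ∈ t, (a i)⁻ :=
        sum_le_sum_of_subset_of_nonneg (fun _ hi => (mem_filter.1 hi).2)
          fun i _ _ => negPart_nonneg (a i)

lemma Finset.sum_abs_le_sum_add_two_mul_sum_negPart {ι : Type*} {s t : Finset ι} {a : ι → ℝ}
    (h : ∀ i ∈ s, a i < 0 → i ∈ t) :
    ∑ i ∈ s, |a i| ≤ ∑ i ∈ s, a i + 2 * ∑ i ∈ t, (a i)⁻ := by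
  have hsplit : ∑ i ∈ s, |a i| = ∑ i ∈ s, a i + 2 * ∑ i ∈ s, (a i)⁻ := by
    rw [mul_sum, ← sum_add_distrib]
    refine sum_congr rfl fun i _ => ?_
    linarith [posPart_add_negPart (a i), posPart_sub_negPart (a i)]
  linarith [sum_negPart_le_of_neg_imp_mem h]

lemma sq_div_sq_le_mul_abs_div_rpow {a B x : ℝ} (hx : 0 ≤ x)
    (ha : |a| ≤ B * x ^ ((1 : ℝ) / 2)) :
    a ^ 2 / x ^ 2 ≤ B * (|a| / x ^ ((3 : ℝ) / 2)) := by
  rcases hx.eq_or_lt with rfl | hx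
  · simp
  have hx2 : x ^ 2 = x ^ ((3 : ℝ) / 2) * x ^ ((1 : ℝ) / 2) := by
    rw [← Real.rpow_add hx, ← Real.rpow_natCast]
    norm_num
  have hsq : a ^ 2 ≤ |a| * (B * x ^ ((1 : ℝ) / 2)) := by
    rw [← sq_abs, sq]
    exact mul_le_mul_of_nonneg_left ha (abs_nonneg a)
  calc a ^ 2 / x ^ 2 ≤ |a| * (B * x ^ ((1 : ℝ) / 2)) / x ^ 2 := by gcongr
    _ = B * (|a| / x ^ ((3 : ℝ) / 2)) := by
      rw [hx2]
      field_simp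

lemma sum_sq_div_sq_le {s t : Finset ℕ} {lam : ℕ → ℝ} {B : ℝ} (hB : 0 ≤ B)
    (h1 : ∀ p ∈ s, |lam p| ≤ B * (p : ℝ) ^ ((1 : ℝ) / 2))
    (hneg : ∀ p ∈ s, lam p < 0 → p ∈ t) :
    ∑ p ∈ s, lam p ^ 2 / (p : ℝ) ^ 2 ≤
      B * (∑ p ∈ s, lam p / (p : ℝ) ^ ((3 : ℝ) / 2) +
        2 * ∑ p ∈ t, (lam p / (p : ℝ) ^ ((3 : ℝ) / 2))⁻) :=
  calc ∑ p ∈ s, lam p ^ 2 / (p : ℝ) ^ 2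
      ≤ ∑ p ∈ s, B * (|lam p| / (p : ℝ) ^ ((3 : ℝ) / 2)) :=
        sum_le_sum fun p hp => sq_div_sq_le_mul_abs_div_rpow p.cast_nonneg (h1 p hp)
    _ = B * ∑ p ∈ s, |lam p / (p : ℝ) ^ ((3 : ℝ) / 2)| := by
        simp only [mul_sum, abs_div, abs_of_nonneg (Real.rpow_nonneg (Nat.cast_nonneg _) _)]
    _ ≤ _ := by
        refine mul_le_mul_of_nonneg_left (sum_abs_le_sum_add_two_mul_sum_negPart
          fun p hp hlt => hneg p hp ?_) hB
        by_contra! hp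
        exact hlt.not_ge (div_nonneg hp (by positivity))

theorem infinite_setOf_neg_of_moment_bounds (P : Set ℕ) (lam : ℕ → ℝ) (B c C : ℝ)
    (hB : 0 ≤ B) (hc : 0 < c)
    (h1 : ∀ p ∈ P, |lam p| ≤ B * (p : ℝ) ^ ((1 : ℝ) / 2))
    (h2 : ∀ X : ℝ, 3 ≤ X →
      |∑ p ∈ (Finset.range (⌊X⌋₊ + 1)).filter (fun p => p ∈ P),
        lam p / (p : ℝ) ^ ((3 : ℝ) / 2)| ≤ C)
    (h3 : ∀ X : ℝ, 3 ≤ X →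
      |(∑ p ∈ (Finset.range (⌊X⌋₊ + 1)).filter (fun p => p ∈ P),
        (lam p) ^ 2 / (p : ℝ) ^ 2) - c * Real.log (Real.log X)| ≤ C) :
    {p : ℕ | p ∈ P ∧ lam p < 0}.Infinite := by
  intro hfin
  set M := B * (C + 2 * ∑ p ∈ hfin.toFinset, (lam p / (p : ℝ) ^ ((3 : ℝ) / 2))⁻) + C
  have hbound : ∀ X : ℝ, 3 ≤ X → c * Real.log (Real.log X) ≤ M := by
    intro X hX
    have hsecond := sum_sq_div_sq_le (s := (range (⌊X⌋₊ + 1)).filter (· ∈ P)) hB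
      (fun p hp => h1 p (mem_filter.1 hp).2)
      fun p hp hlt => hfin.mem_toFinset.2 ⟨(mem_filter.1 hp).2, hlt⟩
    have hfirst := (abs_le.1 (h2 X hX)).2
    have hgrowth := (abs_le.1 (h3 X hX)).1
    linarith [mul_le_mul_of_nonneg_left hfirst hB]
  obtain ⟨X, hXM, hX3⟩ := (((Real.tendsto_log_atTop.comp Real.tendsto_log_atTop).const_mul_atTop
    hc).eventually_gt_atTop M |>.and (Filter.eventually_ge_atTop 3)).exists
  exact (hbound X hX3).not_gt hXM

theorem sign_change_criterion_sqrt_bounded_general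
    (P : Set ℕ) (lam : ℕ → ℝ)
    (B c C : ℝ) (hB : 0 < B) (hc : 0 < c)
    (h1 : ∀ p ∈ P, |lam p| ≤ B * (p : ℝ) ^ ((1 : ℝ) / 2))
    (h2 : ∀ X : ℝ, 3 ≤ X →
      |∑ p ∈ (Finset.range (⌊X⌋₊ + 1)).filter (fun p => p ∈ P),
        lam p / (p : ℝ) ^ ((3 : ℝ) / 2)| ≤ C)
    (h3 : ∀ X : ℝ, 3 ≤ X →
      |(∑ p ∈ (Finset.range (⌊X⌋₊ + 1)).filter (fun p => p ∈ P),
        (lam p) ^ 2 / (p : ℝ) ^ 2) - c * Real.log (Real.log X)| ≤ C) :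
    {p : ℕ | p ∈ P ∧ 0 < lam p}.Infinite ∧ {p : ℕ | p ∈ P ∧ lam p < 0}.Infinite := by
  refine ⟨?_, infinite_setOf_neg_of_moment_bounds P lam B c C hB.le hc h1 h2 h3⟩
  have hneg := infinite_setOf_neg_of_moment_bounds P (-lam) B c C hB.le hc
    (fun p hp => by simpa only [Pi.neg_apply, abs_neg] using h1 p hp)
    (fun X hX => by simpa only [Pi.neg_apply, neg_div, sum_neg_distrib, abs_neg] using h2 X hX)
    (fun X hX => by simpa only [Pi.neg_apply, neg_sq] using h3 X hX)
  simpa only [Pi.neg_apply, neg_lt_zero] using hneg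

/-- Abstract sign-change criterion for coefficients of size O(p^{1/2}): if the renormalized
first moment over primes is bounded while the renormalized second moment grows like
c·log log X, the coefficients change sign infinitely often. -/
theorem sign_change_criterion_sqrt_bounded
    (P : Set ℕ) (hP : ∀ p ∈ P, Nat.Prime p) (lam : ℕ → ℝ)
    (B c C : ℝ) (hB : 0 < B) (hc : 0 < c) (hC : 0 < C)
    (h1 : ∀ p ∈ P, |lam p| ≤ B * (p : ℝ) ^ ((1 : ℝ) / 2))
    (h2 : ∀ X : ℝ, 3 ≤ X →
      |∑ p ∈ (Finset.range (⌊X⌋₊ + 1)).filter (fun p => p ∈ P),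
        lam p / (p : ℝ) ^ ((3 : ℝ) / 2)| ≤ C)
    (h3 : ∀ X : ℝ, 3 ≤ X →
      |(∑ p ∈ (Finset.range (⌊X⌋₊ + 1)).filter (fun p => p ∈ P),
        (lam p) ^ 2 / (p : ℝ) ^ 2) - c * Real.log (Real.log X)| ≤ C) :
    {p : ℕ | p ∈ P ∧ 0 < lam p}.Infinite ∧ {p : ℕ | p ∈ P ∧ lam p < 0}.Infinite :=
  sign_change_criterion_sqrt_bounded_general P lam B c C hB hc h1 h2 h3
end

section
/- Let n ≥ 1, let μ₁, …, μₙ : ℕ → ℝ, and let B, C₀ > 0 be such that |μᵢ(p)| ≤ B for every i and every prime p, and for all real X ≥ 3: (i) |∑_{p ≤ X} μᵢ(p)/p| ≤ C₀ for each i; (ii) |∑_{p ≤ X} μᵢ(p)μⱼ(p)/p| ≤ C₀ for all i ≠ j; and (iii) |∑_{p ≤ X} μᵢ(p)²/p − log log X| ≤ C₀ for each i. Let D₁, …, Dₙ and E₁, …, Eₙ be real numbers and set a(p) := ∑_{i=1}^{n} (Dᵢ + Eᵢ·(p^{1/2} + p^{−1/2}))·μᵢ(p) for each prime p. Then there is a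 constant C such that for all real X ≥ 3, |∑_{p ≤ X} a(p)/p^{3/2}| ≤ C and |∑_{p ≤ X} a(p)²/p² − (∑_{i=1}^{n} Eᵢ²)·log log X| ≤ C; moreover |a(p)| ≤ C·p^{1/2} for every prime p. -/
/-!
Write `s = √p`. Then `a(p) = s·e(p) + r(p)` with `e(p) = ∑ Eᵢ μᵢ(p)` and
`r(p) = ∑ (Dᵢ + Eᵢ/s) μᵢ(p)`, both bounded on primes. Hence `a(p)/p^{3/2} = e(p)/p + O(p^{-3/2})`
and `a(p)²/p² = e(p)²/p + O(p^{-3/2})`. Sums of `O(p^{-3/2})` over primes are bounded, the sum of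
`e(p)/p` is bounded by (i), and expanding `e(p)²` turns (ii) and (iii) into
`∑_{p ≤ X} e(p)²/p = (∑ Eᵢ²) log log X + O(1)`.
-/

open Finset Filter Asymptotics

noncomputable def primesUpTo (X : ℝ) : Finset ℕ := (range (⌊X⌋₊ + 1)).filter Nat.Prime

lemma rpow_three_halves_eq_mul_sqrt {x : ℝ} (hx : 0 ≤ x) : x ^ (3 / 2 : ℝ) = x * √x := by
  rw [Real.sqrt_eq_rpow, ← Real.rpow_one_add' hx (by norm_num)]
  norm_num

lemma sum_mul_eq_sqrt_mul_add {ι : Type*} [Fintype ι] (D E m : ι → ℝ) {x : ℝ} (hx : 0 ≤ x) :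
    ∑ i, (D i + E i * (x ^ (1 / 2 : ℝ) + x ^ (-1 / 2 : ℝ))) * m i
      = √x * ∑ i, E i * m i + ∑ i, (D i + E i / √x) * m i := by
  rw [neg_div, Real.rpow_neg hx, ← Real.sqrt_eq_rpow, mul_sum, ← sum_add_distrib]
  exact sum_congr rfl fun i _ => by ring

-- At `x = 0` both sides of these identities are `0` (division by zero), so they apply to every
-- `p : ℕ` without a positivity side condition.
lemma sqrt_mul_add_div_rpow_three_halves {x : ℝ} (hx : 0 ≤ x) (e r : ℝ) :
    (√x * e + r) / x ^ (3 / 2 : ℝ) = e / x + r / x ^ (3 / 2 : ℝ) := by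
  rw [rpow_three_halves_eq_mul_sqrt hx]
  rcases hx.eq_or_lt with rfl | hx
  · simp
  have := Real.sqrt_pos.mpr hx
  field_simp

lemma sqrt_mul_add_sq_div_sq {x : ℝ} (hx : 0 ≤ x) (e r : ℝ) :
    (√x * e + r) ^ 2 / x ^ 2 = e ^ 2 / x + (2 * e * r + r ^ 2 / √x) / x ^ (3 / 2 : ℝ) := by
  rw [rpow_three_halves_eq_mul_sqrt hx]
  rcases hx.eq_or_lt with rfl | hx
  · simp
  obtain ⟨s, hs, rfl⟩ : ∃ s, 0 < s ∧ s * s = x :=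
    ⟨√x, Real.sqrt_pos.mpr hx, Real.mul_self_sqrt hx.le⟩
  rw [Real.sqrt_mul_self hs.le]
  field_simp
  ring

lemma abs_sum_mul_le {ι : Type*} [Fintype ι] {c m K : ι → ℝ} {B : ℝ} (hc : ∀ i, |c i| ≤ K i)
    (hm : ∀ i, |m i| ≤ B) : |∑ i, c i * m i| ≤ B * ∑ i, K i := by
  rw [mul_sum]
  refine (abs_sum_le_sum_abs _ _).trans (sum_le_sum fun i _ => ?_)
  rw [abs_mul, mul_comm B]
  exact mul_le_mul (hc i) (hm i) (abs_nonneg _) ((abs_nonneg _).trans (hc i))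

lemma abs_add_div_le {x : ℝ} (hx : 1 ≤ x) (d e : ℝ) : |d + e / x| ≤ |d| + |e| := by
  refine (abs_add_le _ _).trans (add_le_add_right ?_ _)
  rw [abs_div, abs_of_pos (zero_lt_one.trans_le hx)]
  exact div_le_self (abs_nonneg e) hx

lemma abs_sqrt_mul_add_le {x e r K L : ℝ} (hx : 1 ≤ x) (he : |e| ≤ K) (hr : |r| ≤ L) :
    |√x * e + r| ≤ (K + L) * √x := by
  have hs : 1 ≤ √x := Real.one_le_sqrt.mpr hx
  calc |√x * e + r| ≤ √x * |e| + |r| := by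
        simpa [abs_mul, abs_of_nonneg (Real.sqrt_nonneg x)] using abs_add_le (√x * e) r
    _ ≤ (K + L) * √x := by
        nlinarith [mul_le_mul_of_nonneg_left he (Real.sqrt_nonneg x),
          mul_le_mul_of_nonneg_left hs ((abs_nonneg r).trans hr)]

lemma abs_two_mul_mul_add_sq_div_le {s e r K L : ℝ} (hs : 1 ≤ s) (he : |e| ≤ K)
    (hr : |r| ≤ L) : |2 * e * r + r ^ 2 / s| ≤ 2 * K * L + L ^ 2 := by
  have hcross : |2 * e * r| ≤ 2 * K * L := by
    rw [abs_mul, abs_mul, abs_two, mul_assoc, mul_assoc]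
    exact mul_le_mul_of_nonneg_left (mul_le_mul he hr (abs_nonneg r) ((abs_nonneg e).trans he))
      zero_le_two
  have hsq : |r ^ 2 / s| ≤ L ^ 2 := by
    rw [abs_div, abs_of_pos (zero_lt_one.trans_le hs), abs_pow]
    exact (div_le_self (sq_nonneg _) hs).trans (pow_le_pow_left₀ (abs_nonneg r) hr 2)
  exact (abs_add_le _ _).trans (add_le_add hcross hsq)

lemma isBigO_principal_one_of_abs_le {s : Set ℝ} {f : ℝ → ℝ} {C : ℝ}
    (h : ∀ X ∈ s, |f X| ≤ C) : f =O[𝓟 s] (fun _ => (1 : ℝ)) :=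
  IsBigO.of_bound C (eventually_principal.mpr fun X hX => by simpa using h X hX)

lemma exists_abs_le_of_isBigO_principal_one {s : Set ℝ} {f : ℝ → ℝ}
    (h : f =O[𝓟 s] (fun _ => (1 : ℝ))) : ∃ C, ∀ X ∈ s, |f X| ≤ C := by
  simpa using isBigO_principal.mp h

section SumsOverPrimes

variable {l : Filter ℝ}

lemma isBigO_one_sum_primesUpTo_div_rpow {f : ℕ → ℝ} {M σ : ℝ} (hσ : 1 < σ)
    (hf : ∀ p, p.Prime → |f p| ≤ M) :
    (fun X => ∑ p ∈ primesUpTo X, f p / (p : ℝ) ^ σ) =O[l] (fun _ => (1 : ℝ)) := by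
  have hM : 0 ≤ M := (abs_nonneg _).trans (hf 2 Nat.prime_two)
  have hsum := Real.summable_one_div_nat_rpow.mpr hσ
  refine IsBigO.of_bound (M * ∑' n : ℕ, 1 / (n : ℝ) ^ σ) (Eventually.of_forall fun X => ?_)
  rw [norm_one, mul_one, Real.norm_eq_abs]
  calc |∑ p ∈ primesUpTo X, f p / (p : ℝ) ^ σ|
      ≤ ∑ p ∈ primesUpTo X, M * (1 / (p : ℝ) ^ σ) := by
        refine (abs_sum_le_sum_abs _ _).trans (sum_le_sum fun p hp => ?_)
        rw [abs_div, abs_of_nonneg (by positivity : (0 : ℝ) ≤ (p : ℝ) ^ σ),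
          ← div_eq_mul_one_div]
        exact div_le_div_of_nonneg_right (hf p (mem_filter.mp hp).2) (by positivity)
    _ = M * ∑ p ∈ primesUpTo X, 1 / (p : ℝ) ^ σ := (mul_sum ..).symm
    _ ≤ M * ∑' n : ℕ, 1 / (n : ℝ) ^ σ :=
        mul_le_mul_of_nonneg_left (hsum.sum_le_tsum _ fun n _ => by positivity) hM

lemma isBigO_one_sum_primesUpTo_sum_mul_div {ι : Type*} [Fintype ι] {μ : ι → ℕ → ℝ}
    (h : ∀ i, (fun X => ∑ p ∈ primesUpTo X, μ i p / p) =O[l] (fun _ => (1 : ℝ)))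
    (E : ι → ℝ) :
    (fun X => ∑ p ∈ primesUpTo X, (∑ i, E i * μ i p) / p) =O[l] (fun _ => (1 : ℝ)) := by
  have hswap : ∀ X, ∑ p ∈ primesUpTo X, (∑ i, E i * μ i p) / p
      = ∑ i, E i * ∑ p ∈ primesUpTo X, μ i p / p := fun X => by
    simp only [sum_div, mul_sum, mul_div_assoc]
    exact sum_comm
  simp only [hswap]
  exact IsBigO.fun_sum fun i _ => (h i).const_mul_left (E i)

lemma isBigO_one_sum_primesUpTo_sq_div_sub {ι : Type*} [Fintype ι] [DecidableEq ι]
    {μ : ι → ℕ → ℝ} {L : ℝ → ℝ}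
    (hoff : ∀ i j, i ≠ j →
      (fun X => ∑ p ∈ primesUpTo X, μ i p * μ j p / p) =O[l] (fun _ => (1 : ℝ)))
    (hdiag : ∀ i, (fun X => ∑ p ∈ primesUpTo X, μ i p ^ 2 / p - L X) =O[l] (fun _ => (1 : ℝ)))
    (E : ι → ℝ) :
    (fun X => ∑ p ∈ primesUpTo X, (∑ i, E i * μ i p) ^ 2 / p - (∑ i, E i ^ 2) * L X)
      =O[l] (fun _ => (1 : ℝ)) := by
  have hexpand : ∀ X, ∑ p ∈ primesUpTo X, (∑ i, E i * μ i p) ^ 2 / p - (∑ i, E i ^ 2) * L X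
      = ∑ i, ∑ j, E i * E j *
          (∑ p ∈ primesUpTo X, μ i p * μ j p / p - if i = j then L X else 0) := by
    intro X
    have hsq : ∀ p : ℕ, (∑ i, E i * μ i p) ^ 2 / p
        = ∑ i, ∑ j, E i * E j * (μ i p * μ j p / p) := by
      intro p
      rw [sq, sum_mul_sum, sum_div]
      exact sum_congr rfl fun i _ => by rw [sum_div]; exact sum_congr rfl fun j _ => by ring
    have hdelta : (∑ i, E i ^ 2) * L X = ∑ i, ∑ j, E i * E j * (if i = j then L X else 0) := by
      simp [sum_mul, sq]
    simp only [hsq, hdelta, mul_sub, sum_sub_distrib, mul_sum]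
    rw [sum_comm]
    exact congrArg (· - _) (sum_congr rfl fun i _ => sum_comm)
  simp only [hexpand]
  refine IsBigO.fun_sum fun i _ => IsBigO.fun_sum fun j _ => ?_
  by_cases hij : i = j
  · subst hij
    simpa [sq] using (hdiag i).const_mul_left (E i * E i)
  · simpa [hij] using (hoff i j hij).const_mul_left (E i * E j)

variable {e r : ℕ → ℝ} {Ke Kr : ℝ}

lemma isBigO_one_sum_primesUpTo_sqrt_mul_add_div_rpow (hr : ∀ p, p.Prime → |r p| ≤ Kr)
    (he : (fun X => ∑ p ∈ primesUpTo X, e p / p) =O[l] (fun _ => (1 : ℝ))) :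
    (fun X => ∑ p ∈ primesUpTo X, (√(p : ℝ) * e p + r p) / (p : ℝ) ^ (3 / 2 : ℝ))
      =O[l] (fun _ => (1 : ℝ)) := by
  simp only [sqrt_mul_add_div_rpow_three_halves (Nat.cast_nonneg _), sum_add_distrib]
  exact he.add (isBigO_one_sum_primesUpTo_div_rpow (by norm_num) hr)

lemma isBigO_one_sum_primesUpTo_sqrt_mul_add_sq_div_sq_sub {L : ℝ → ℝ}
    (he : ∀ p, p.Prime → |e p| ≤ Ke) (hr : ∀ p, p.Prime → |r p| ≤ Kr)
    (hmain : (fun X => ∑ p ∈ primesUpTo X, e p ^ 2 / p - L X) =O[l] (fun _ => (1 : ℝ))) :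
    (fun X => ∑ p ∈ primesUpTo X, (√(p : ℝ) * e p + r p) ^ 2 / (p : ℝ) ^ 2 - L X)
      =O[l] (fun _ => (1 : ℝ)) := by
  simp only [sqrt_mul_add_sq_div_sq (Nat.cast_nonneg _), sum_add_distrib, add_sub_right_comm]
  exact hmain.add (isBigO_one_sum_primesUpTo_div_rpow (by norm_num) fun p hp =>
    abs_two_mul_mul_add_sq_div_le (Real.one_le_sqrt.mpr (mod_cast hp.one_lt.le))
      (he p hp) (hr p hp))

end SumsOverPrimes

theorem linear_combination_selberg_orthogonality_case_two_general
    (n : ℕ) (μ : Fin n → ℕ → ℝ) (B C₀ : ℝ)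
    (hbound : ∀ i : Fin n, ∀ p : ℕ, Nat.Prime p → |μ i p| ≤ B)
    (h1 : ∀ i : Fin n, ∀ X : ℝ, 3 ≤ X →
      |∑ p ∈ (Finset.range (⌊X⌋₊ + 1)).filter Nat.Prime, μ i p / p| ≤ C₀)
    (h2 : ∀ i j : Fin n, i ≠ j → ∀ X : ℝ, 3 ≤ X →
      |∑ p ∈ (Finset.range (⌊X⌋₊ + 1)).filter Nat.Prime, μ i p * μ j p / p| ≤ C₀)
    (h3 : ∀ i : Fin n, ∀ X : ℝ, 3 ≤ X →
      |(∑ p ∈ (Finset.range (⌊X⌋₊ + 1)).filter Nat.Prime, (μ i p) ^ 2 / p)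
        - Real.log (Real.log X)| ≤ C₀)
    (D E : Fin n → ℝ) :
    ∃ C : ℝ,
      (∀ X : ℝ, 3 ≤ X →
        |∑ p ∈ (Finset.range (⌊X⌋₊ + 1)).filter Nat.Prime,
          (∑ i, (D i + E i * ((p : ℝ) ^ ((1 : ℝ) / 2) + (p : ℝ) ^ (-(1 : ℝ) / 2))) * μ i p)
            / (p : ℝ) ^ ((3 : ℝ) / 2)| ≤ C ∧
        |(∑ p ∈ (Finset.range (⌊X⌋₊ + 1)).filter Nat.Prime,
          (∑ i, (D i + E i * ((p : ℝ) ^ ((1 : ℝ) / 2) + (p : ℝ) ^ (-(1 : ℝ) / 2))) * μ i p) ^ 2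
            / (p : ℝ) ^ 2)
          - (∑ i, (E i) ^ 2) * Real.log (Real.log X)| ≤ C) ∧
      (∀ p : ℕ, Nat.Prime p →
        |∑ i, (D i + E i * ((p : ℝ) ^ ((1 : ℝ) / 2) + (p : ℝ) ^ (-(1 : ℝ) / 2))) * μ i p|
          ≤ C * (p : ℝ) ^ ((1 : ℝ) / 2)) := by
  have hsqrt : ∀ p : ℕ, p.Prime → 1 ≤ √(p : ℝ) := fun p hp =>
    Real.one_le_sqrt.mpr (mod_cast hp.one_lt.le)
  have he : ∀ p : ℕ, p.Prime → |∑ i, E i * μ i p| ≤ B * ∑ i, |E i| :=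
    fun p hp => abs_sum_mul_le (fun i => le_rfl) fun i => hbound i p hp
  have hr : ∀ p : ℕ, p.Prime →
      |∑ i, (D i + E i / √(p : ℝ)) * μ i p| ≤ B * ∑ i, (|D i| + |E i|) := fun p hp =>
    abs_sum_mul_le (fun i => abs_add_div_le (hsqrt p hp) _ _) fun i => hbound i p hp
  have ha : ∀ p : ℕ,
      ∑ i, (D i + E i * ((p : ℝ) ^ ((1 : ℝ) / 2) + (p : ℝ) ^ (-(1 : ℝ) / 2))) * μ i p
        = √(p : ℝ) * ∑ i, E i * μ i p + ∑ i, (D i + E i / √(p : ℝ)) * μ i p := fun p =>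
    sum_mul_eq_sqrt_mul_add D E (μ · p) (Nat.cast_nonneg p)
  obtain ⟨c₁, hc₁⟩ := exists_abs_le_of_isBigO_principal_one <|
    isBigO_one_sum_primesUpTo_sqrt_mul_add_div_rpow hr <|
      isBigO_one_sum_primesUpTo_sum_mul_div (fun i => isBigO_principal_one_of_abs_le (h1 i)) E
  obtain ⟨c₂, hc₂⟩ := exists_abs_le_of_isBigO_principal_one <|
    isBigO_one_sum_primesUpTo_sqrt_mul_add_sq_div_sq_sub he hr <|
      isBigO_one_sum_primesUpTo_sq_div_sub
        (fun i j hij => isBigO_principal_one_of_abs_le (h2 i j hij))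
        (fun i => isBigO_principal_one_of_abs_le (h3 i)) E
  refine ⟨max (max c₁ c₂) (B * ∑ i, |E i| + B * ∑ i, (|D i| + |E i|)),
    fun X hX => ?_, fun p hp => ?_⟩
  · simp only [ha]
    exact ⟨(hc₁ X hX).trans (by simp), (hc₂ X hX).trans (by simp)⟩
  · rw [ha, ← Real.sqrt_eq_rpow]
    exact (abs_sqrt_mul_add_le (mod_cast hp.one_lt.le) (he p hp) (hr p hp)).trans
      (mul_le_mul_of_nonneg_right (le_max_right _ _) (Real.sqrt_nonneg _))

/-- Selberg-orthogonality-style relation for linear combinations (Case 2): with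
coefficients Dᵢ + Eᵢ·(p^{1/2} + p^{−1/2}), the combination a(p) has bounded first moment
normalized by p^{3/2}, second moment normalized by p² asymptotic to (∑ Eᵢ²)·log log X,
and satisfies |a(p)| ≤ C·p^{1/2}. -/
theorem linear_combination_selberg_orthogonality_case_two
    (n : ℕ) (hn : 1 ≤ n) (μ : Fin n → ℕ → ℝ) (B C₀ : ℝ) (hB : 0 < B) (hC₀ : 0 < C₀)
    (hbound : ∀ i : Fin n, ∀ p : ℕ, Nat.Prime p → |μ i p| ≤ B)
    (h1 : ∀ i : Fin n, ∀ X : ℝ, 3 ≤ X →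
      |∑ p ∈ (Finset.range (⌊X⌋₊ + 1)).filter Nat.Prime, μ i p / p| ≤ C₀)
    (h2 : ∀ i j : Fin n, i ≠ j → ∀ X : ℝ, 3 ≤ X →
      |∑ p ∈ (Finset.range (⌊X⌋₊ + 1)).filter Nat.Prime, μ i p * μ j p / p| ≤ C₀)
    (h3 : ∀ i : Fin n, ∀ X : ℝ, 3 ≤ X →
      |(∑ p ∈ (Finset.range (⌊X⌋₊ + 1)).filter Nat.Prime, (μ i p) ^ 2 / p)
        - Real.log (Real.log X)| ≤ C₀)
    (D E : Fin n → ℝ) :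
    ∃ C : ℝ,
      (∀ X : ℝ, 3 ≤ X →
        |∑ p ∈ (Finset.range (⌊X⌋₊ + 1)).filter Nat.Prime,
          (∑ i, (D i + E i * ((p : ℝ) ^ ((1 : ℝ) / 2) + (p : ℝ) ^ (-(1 : ℝ) / 2))) * μ i p)
            / (p : ℝ) ^ ((3 : ℝ) / 2)| ≤ C ∧
        |(∑ p ∈ (Finset.range (⌊X⌋₊ + 1)).filter Nat.Prime,
          (∑ i, (D i + E i * ((p : ℝ) ^ ((1 : ℝ) / 2) + (p : ℝ) ^ (-(1 : ℝ) / 2))) * μ i p) ^ 2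
            / (p : ℝ) ^ 2)
          - (∑ i, (E i) ^ 2) * Real.log (Real.log X)| ≤ C) ∧
      (∀ p : ℕ, Nat.Prime p →
        |∑ i, (D i + E i * ((p : ℝ) ^ ((1 : ℝ) / 2) + (p : ℝ) ^ (-(1 : ℝ) / 2))) * μ i p|
          ≤ C * (p : ℝ) ^ ((1 : ℝ) / 2)) :=
  linear_combination_selberg_orthogonality_case_two_general n μ B C₀ hbound h1 h2 h3 D E
end
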